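/- arXiv:1602.01532 — 2 statements merged into one kernel-verified Lean document; each statement's English description precedes it below -/
import Mathlib

section
/- Let $R\subset\mathbb{R}^2$ be a compact rectangle and $f:\mathbb{R}^2\to\mathbb{R}$ nonnegative and integrable on $R$. Fix real constants $q,\lambda,h$ and fix $y_0\in\mathbb{R}$. Define $\bar L(x,y;x_0)=\big(q+\lambda((x-x_0)^2+(y-y_0)^2)\big)\big((x-x_0)^2+(y-y_0)^2+h^2\big)$ and $G(x_0)=\int_R \bar L(x,y;x_0)f(x,y)\,dx\,dy$. Then $G$ is differentiable on $\mathbb{R}$ and $G'(x_0)=a_1x_0^3+a_2x_0^2+a_3x_0+a_4$, where, writing $F(u)=\int_R u(x,y)f(x,y)\,dx\,dy$: $a_1=4\lambda F(1)$, $a_2=-12\lambda F(x)$, $a_3=F\big(2q+2\lambda h^2+12\lambda x^2+4\lambda(y-y_0)^2\big)$, and $a_4=-F\big(2qx+2\lambda h^2 x+4\lambda x^3+4\lambda x(y-y_0)^2\big)$. Consequently, $x_0$ is a critical point of $G$ if and only if it is a root of this cubic polynomial. -/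
open MeasureTheory

/-!
Expanding the product, `L p x0 * f p` is a quartic polynomial in `x0` whose coefficients are
continuous functions of `p` times `f`; on the compact rectangle these are integrable, so `G` is the
quartic whose coefficients are their integrals, and `G'` is the cubic obtained by differentiating it
term by term.
-/

section PolynomialIntegrand

variable {α : Type*} [MeasurableSpace α] {μ : Measure α} {n : ℕ}

theorem integral_sum_mul_pow (c : Fin n → α → ℝ) (hc : ∀ k, Integrable (c k) μ) (s : ℝ) :
    ∫ x, ∑ k, c k x * s ^ (k : ℕ) ∂μ = ∑ k, (∫ x, c k x ∂μ) * s ^ (k : ℕ) := by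
  rw [integral_finsetSum _ fun k _ => (hc k).mul_const _]
  simp only [integral_mul_const]

theorem hasDerivAt_integral_sum_mul_pow (c : Fin n → α → ℝ) (hc : ∀ k, Integrable (c k) μ)
    (t : ℝ) :
    HasDerivAt (fun s => ∫ x, ∑ k, c k x * s ^ (k : ℕ) ∂μ)
      (∑ k, (∫ x, c k x ∂μ) * ((k : ℕ) * t ^ ((k : ℕ) - 1))) t := by
  simp only [integral_sum_mul_pow c hc]
  exact HasDerivAt.fun_sum fun k _ => (hasDerivAt_pow (k : ℕ) t).const_mul _

end PolynomialIntegrand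

theorem stmt_11_general (xs xs' ys ys' : ℝ) (R : Set (ℝ × ℝ))
    (hR : R = Set.Icc xs xs' ×ˢ Set.Icc ys ys')
    (f : ℝ × ℝ → ℝ)
    (hfi : IntegrableOn f R)
    (q l h y0 : ℝ)
    (L : ℝ × ℝ → ℝ → ℝ)
    (hL : ∀ p : ℝ × ℝ, ∀ x0 : ℝ, L p x0 =
      (q + l * ((p.1 - x0) ^ 2 + (p.2 - y0) ^ 2)) *
        ((p.1 - x0) ^ 2 + (p.2 - y0) ^ 2 + h ^ 2))
    (G : ℝ → ℝ)
    (hG : ∀ x0 : ℝ, G x0 = ∫ p in R, L p x0 * f p)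
    (F : ((ℝ × ℝ) → ℝ) → ℝ)
    (hF : ∀ u : (ℝ × ℝ) → ℝ, F u = ∫ p in R, u p * f p)
    (a1 a2 a3 a4 : ℝ)
    (ha1 : a1 = 4 * l * F (fun _ => 1))
    (ha2 : a2 = -12 * l * F (fun p => p.1))
    (ha3 : a3 = F (fun p =>
      2 * q + 2 * l * h ^ 2 + 12 * l * p.1 ^ 2 + 4 * l * (p.2 - y0) ^ 2))
    (ha4 : a4 = -F (fun p =>
      2 * q * p.1 + 2 * l * h ^ 2 * p.1 + 4 * l * p.1 ^ 3 +
        4 * l * p.1 * (p.2 - y0) ^ 2)) :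
    (∀ x0 : ℝ, HasDerivAt G (a1 * x0 ^ 3 + a2 * x0 ^ 2 + a3 * x0 + a4) x0) ∧
    (∀ x0 : ℝ, deriv G x0 = 0 ↔ a1 * x0 ^ 3 + a2 * x0 ^ 2 + a3 * x0 + a4 = 0) := by
  have hRc : IsCompact R := hR ▸ isCompact_Icc.prod isCompact_Icc
  let r : ℝ × ℝ → ℝ := fun p => p.1 ^ 2 + (p.2 - y0) ^ 2
  let c : Fin 5 → ℝ × ℝ → ℝ := ![
    fun p => (l * r p ^ 2 + (q + l * h ^ 2) * r p + q * h ^ 2) * f p,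
    fun p => (-4 * l * p.1 * r p - 2 * (q + l * h ^ 2) * p.1) * f p,
    fun p => (q + l * h ^ 2 + 6 * l * p.1 ^ 2 + 2 * l * (p.2 - y0) ^ 2) * f p,
    fun p => -4 * l * p.1 * f p,
    fun p => l * f p]
  have hc : ∀ k, IntegrableOn (c k) R := by
    intro k
    fin_cases k <;> exact hfi.continuousOn_mul (by fun_prop) hRc
  have hGc : G = fun s => ∫ p in R, ∑ k, c k p * s ^ (k : ℕ) := by
    ext s
    rw [hG]
    congr 1 with p
    simp only [Fin.sum_univ_five, Fin.coe_ofNat_eq_mod, Nat.reduceMod, c, r, hL, Matrix.cons_val]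
    ring
  obtain ⟨ha1c, ha2c, ha3c, ha4c⟩ : a1 = 4 * (∫ p in R, c 4 p) ∧ a2 = 3 * (∫ p in R, c 3 p) ∧
      a3 = 2 * (∫ p in R, c 2 p) ∧ a4 = ∫ p in R, c 1 p := by
    subst ha1 ha2 ha3 ha4
    simp only [hF, ← integral_const_mul, ← integral_neg]
    refine ⟨?_, ?_, ?_, ?_⟩ <;> congr 1 with p <;> simp only [c, r, Matrix.cons_val] <;> ring
  have hder : ∀ t, HasDerivAt G (a1 * t ^ 3 + a2 * t ^ 2 + a3 * t + a4) t := by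
    intro t
    rw [hGc]
    convert hasDerivAt_integral_sum_mul_pow c hc t using 1
    simp only [Fin.sum_univ_five, Fin.coe_ofNat_eq_mod, Nat.reduceMod, Nat.reduceSub,
      Nat.cast_ofNat, ha1c, ha2c, ha3c, ha4c]
    ring
  exact ⟨hder, fun t => by rw [(hder t).deriv]⟩

/-- Theorem 2 of the paper (x-coordinate): with the polynomial approximation of the
average path loss, the objective `G` is differentiable and its derivative is a cubic
polynomial in `x0` whose coefficients are moments of the user density; hence the
critical points of `G` are exactly the roots of that cubic. -/
theorem stmt_11 (xs xs' ys ys' : ℝ) (R : Set (ℝ × ℝ))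
    (hR : R = Set.Icc xs xs' ×ˢ Set.Icc ys ys')
    (f : ℝ × ℝ → ℝ)
    (hf0 : ∀ p ∈ R, 0 ≤ f p)
    (hfi : IntegrableOn f R)
    (q l h y0 : ℝ)
    (L : ℝ × ℝ → ℝ → ℝ)
    (hL : ∀ p : ℝ × ℝ, ∀ x0 : ℝ, L p x0 =
      (q + l * ((p.1 - x0) ^ 2 + (p.2 - y0) ^ 2)) *
        ((p.1 - x0) ^ 2 + (p.2 - y0) ^ 2 + h ^ 2))
    (G : ℝ → ℝ)
    (hG : ∀ x0 : ℝ, G x0 = ∫ p in R, L p x0 * f p)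
    (F : ((ℝ × ℝ) → ℝ) → ℝ)
    (hF : ∀ u : (ℝ × ℝ) → ℝ, F u = ∫ p in R, u p * f p)
    (a1 a2 a3 a4 : ℝ)
    (ha1 : a1 = 4 * l * F (fun _ => 1))
    (ha2 : a2 = -12 * l * F (fun p => p.1))
    (ha3 : a3 = F (fun p =>
      2 * q + 2 * l * h ^ 2 + 12 * l * p.1 ^ 2 + 4 * l * (p.2 - y0) ^ 2))
    (ha4 : a4 = -F (fun p =>
      2 * q * p.1 + 2 * l * h ^ 2 * p.1 + 4 * l * p.1 ^ 3 +
        4 * l * p.1 * (p.2 - y0) ^ 2)) :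
    (∀ x0 : ℝ, HasDerivAt G (a1 * x0 ^ 3 + a2 * x0 ^ 2 + a3 * x0 + a4) x0) ∧
    (∀ x0 : ℝ, deriv G x0 = 0 ↔ a1 * x0 ^ 3 + a2 * x0 ^ 2 + a3 * x0 + a4 = 0) :=
  stmt_11_general xs xs' ys ys' R hR f hfi q l h y0 L hL G hG F hF a1 a2 a3 a4 ha1 ha2 ha3 ha4
end

section
/- Let $D\subset\mathbb{R}^2$ be a bounded measurable set, $f:D\to\mathbb{R}$ a nonnegative integrable density, and let $\mu$ denote the measure with density $f$ with respect to Lebesgue measure. Let $K\geq 2$, let $F_1,\dots,F_K:D\to\mathbb{R}$ be nonnegative bounded measurable functions, and let $S:\mathbb{R}\to\mathbb{R}$ be differentiable. For a measurable partition $(C_1,\dots,C_K)$ of $D$, set $M_i=\mu(C_i)$ and $J(C_1,\dots,C_K)=\sum_{i=1}^K S(M_i)\int_{C_i}F_i\,d\mu$. Suppose $(C_1^*,\dots,C_K^*)$ minimizes $J$ over all measurable partitions of $D$. Then for every pair $i\neq j$, for $\mu$-almost every $(x,y)\in C_i^*$: $S(M_i)F_i(x,y)+S'(M_i)\int_{C_i^*}F_i\,d\mu\;\leq\;S(M_j)F_j(x,y)+S'(M_j)\int_{C_j^*}F_j\,d\mu$,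 where $M_i=\mu(C_i^*)$ and $M_j=\mu(C_j^*)$. -/
/-!
Suppose that on a set of positive measure inside `C i` the marginal cost of cell `i` exceeded
that of cell `j` by some `δ > 0`. Since `μ` has no atoms, that set contains pieces `B` of
arbitrarily small positive mass `a`; moving such a piece from `C i` to `C j` changes the total
cost by `(S'(Mj) Ij - S'(Mi) Ii) a - ∫_B (S(Mi) Fi - S(Mj) Fj) dμ + o(a) ≤ -δ a + o(a)`,
which is negative for small `a` and contradicts minimality.
-/

open MeasureTheory Filter Topology Set
open scoped ENNReal

theorem exists_subset_measure_pos_lt {X : Type*} [MetricSpace X] [HereditarilyLindelofSpace X]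
    [MeasurableSpace X] [OpensMeasurableSpace X] {μ : Measure X} [IsFiniteMeasure μ]
    [NullSingletonClass μ] {A : Set X} (hA : MeasurableSet A) (hA0 : μ A ≠ 0) {ε : ℝ≥0∞}
    (hε : 0 < ε) : ∃ B ⊆ A, MeasurableSet B ∧ 0 < μ B ∧ μ B < ε := by
  -- balls around a point of the support of `μ|A` have positive mass, tending to `μ|A {x} = 0`
  obtain ⟨x, hx⟩ := (μ.restrict A).nonempty_support (by simpa using hA0)
  have hball : Tendsto (fun r => μ.restrict A (Metric.ball x r)) (𝓝[>] 0) (𝓝 0) := by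
    simpa [Metric.thickening_singleton] using
      tendsto_measure_thickening (μ := μ.restrict A) (s := {x}) ⟨1, one_pos, measure_ne_top _ _⟩
  obtain ⟨r, hrε, hr⟩ := ((hball.eventually (gt_mem_nhds hε)).and self_mem_nhdsWithin).exists
  have hpos := (Measure.mem_support_iff_forall x).1 hx _ (Metric.ball_mem_nhds x hr)
  rw [Measure.restrict_apply Metric.isOpen_ball.measurableSet] at hpos hrε
  exact ⟨_, inter_subset_right, Metric.isOpen_ball.measurableSet.inter hA, hpos, hrε⟩

theorem exists_measure_add_le_ne_zero_of_not_ae_le {α : Type*} [MeasurableSpace α]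
    {ν : Measure α} {f g : α → ℝ} (h : ¬ ∀ᵐ x ∂ν, f x ≤ g x) :
    ∃ δ > 0, ν {x | g x + δ ≤ f x} ≠ 0 := by
  contrapose! h
  have hlt : ∀ᵐ x ∂ν, ∀ n : ℕ, f x < g x + 1 / (n + 1) :=
    ae_all_iff.2 fun n => ae_iff.2 (by simpa using h (1 / (n + 1)) (by positivity))
  filter_upwards [hlt] with x hx
  refine le_of_forall_pos_lt_add fun ε hε => ?_
  obtain ⟨n, hn⟩ := exists_nat_one_div_lt hε
  linarith [hx n]

theorem Fintype.sum_sub_sum_eq_of_eq_off_pair {ι M : Type*} [Fintype ι] [AddCommGroup M]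
    {f g : ι → M} {i j : ι} (hij : i ≠ j) (h : ∀ k, k ≠ i → k ≠ j → f k = g k) :
    ∑ k, f k - ∑ k, g k = (f i - g i) + (f j - g j) := by
  rw [← Finset.sum_sub_distrib]
  exact Fintype.sum_eq_add i j hij fun k hk => sub_eq_zero.2 (h k hk.1 hk.2)

-- First-order expansion of the two affected terms when mass `a` moves from cell `i` to cell `j`.
theorem eventually_transfer_lt {S : ℝ → ℝ} {S'i S'j Mi Mj Ii Ij bi bj δ : ℝ}
    (hi : HasDerivAt S S'i Mi) (hj : HasDerivAt S S'j Mj) (hδ : 0 < δ) :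
    ∀ᶠ a in 𝓝[>] 0, ∀ aI aJ : ℝ, |aI| ≤ bi * a → |aJ| ≤ bj * a →
      (S'j * Ij - S'i * Ii + δ) * a ≤ S Mi * aI - S Mj * aJ →
      S (Mi - a) * (Ii - aI) + S (Mj + a) * (Ij + aJ) < S Mi * Ii + S Mj * Ij := by
  have hi' : HasDerivAt (fun a => S (Mi - a)) (-S'i) 0 :=
    HasDerivAt.comp_const_sub Mi 0 (by simpa using hi)
  have hj' : HasDerivAt (fun a => S (Mj + a)) S'j 0 :=
    HasDerivAt.comp_const_add Mj 0 (by simpa using hj)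
  have hsi := hi'.tendsto_slope_zero_right
  have hsj := hj'.tendsto_slope_zero_right
  have hci : Tendsto (fun a => S (Mi - a) - S Mi) (𝓝[>] 0) (𝓝 0) := by
    simpa using (hi'.continuousAt.tendsto.sub_const (S Mi)).mono_left nhdsWithin_le_nhds
  have hcj : Tendsto (fun a => S (Mj + a) - S Mj) (𝓝[>] 0) (𝓝 0) := by
    simpa using (hj'.continuousAt.tendsto.sub_const (S Mj)).mono_left nhdsWithin_le_nhds
  simp only [zero_add, sub_zero, add_zero, smul_eq_mul] at hsi hsj
  have hQ : Tendsto (fun a => a⁻¹ * (S (Mi - a) - S Mi) * Ii + a⁻¹ * (S (Mj + a) - S Mj) * Ij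
      + bi * |S (Mi - a) - S Mi| + bj * |S (Mj + a) - S Mj|) (𝓝[>] 0)
      (𝓝 (S'j * Ij - S'i * Ii)) := by
    convert ((hsi.mul_const Ii).add (hsj.mul_const Ij)).add (hci.abs.const_mul bi) |>.add
      (hcj.abs.const_mul bj) using 2
    simp only [abs_zero, mul_zero, add_zero]
    ring
  filter_upwards [hQ.eventually (gt_mem_nhds (lt_add_of_pos_right _ hδ)), self_mem_nhdsWithin]
    with a hQa (ha : 0 < a) aI aJ hI hJ hg
  have hu : -((S (Mi - a) - S Mi) * aI) ≤ bi * a * |S (Mi - a) - S Mi| := by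
    calc _ ≤ |S (Mi - a) - S Mi| * |aI| := by rw [← abs_mul]; exact neg_le_abs _
      _ ≤ _ := by rw [mul_comm (bi * a)]; gcongr
  have hv : (S (Mj + a) - S Mj) * aJ ≤ bj * a * |S (Mj + a) - S Mj| := by
    calc _ ≤ |S (Mj + a) - S Mj| * |aJ| := by rw [← abs_mul]; exact le_abs_self _
      _ ≤ _ := by rw [mul_comm (bj * a)]; gcongr
  have hQa_mul := mul_lt_mul_of_pos_left hQa ha
  field_simp at hQa_mul
  linarith

section Reassign

variable {α ι : Type*} [DecidableEq ι] {A : Set α} {C : ι → Set α} {j : ι}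

def reassign (C : ι → Set α) (A : Set α) (j : ι) : ι → Set α :=
  fun k => if k = j then C k ∪ A else C k \ A

@[simp] theorem reassign_self : reassign C A j j = C j ∪ A := if_pos rfl

theorem reassign_of_ne {k : ι} (hk : k ≠ j) : reassign C A j k = C k \ A := if_neg hk

end Reassign

section Partition

variable {α ι : Type*} [MeasurableSpace α] {μ : Measure α} {D A : Set α} {C : ι → Set α} {i j : ι}

def IsMeasurablePartition (D : Set α) (C : ι → Set α) : Prop :=
  (∀ i, MeasurableSet (C i)) ∧ (Pairwise fun i j => Disjoint (C i) (C j)) ∧ (⋃ i, C i) = D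

theorem IsMeasurablePartition.subset (hC : IsMeasurablePartition D C) (i : ι) : C i ⊆ D :=
  hC.2.2 ▸ subset_iUnion C i

noncomputable def partitionCost [Fintype ι] (μ : Measure α) (S : ℝ → ℝ) (F : ι → α → ℝ)
    (C : ι → Set α) : ℝ :=
  ∑ i, S (μ.real (C i)) * ∫ p in C i, F i p ∂μ

theorem isMeasurablePartition_reassign [DecidableEq ι] (hC : IsMeasurablePartition D C)
    (hA : MeasurableSet A) (hAD : A ⊆ D) (j : ι) : IsMeasurablePartition D (reassign C A j) := by
  obtain ⟨hCm, hCd, hCU⟩ := hC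
  refine ⟨fun k => ?_, fun k l hkl => ?_, ?_⟩
  · dsimp only [reassign]; split_ifs
    exacts [(hCm k).union hA, (hCm k).diff hA]
  · dsimp only [reassign]; split_ifs with hk hl hl
    · exact absurd (hk.trans hl.symm) hkl
    · exact disjoint_union_left.2 ⟨(hCd hkl).mono_right sdiff_subset, disjoint_sdiff_right⟩
    · exact disjoint_union_right.2 ⟨(hCd hkl).mono_left sdiff_subset, disjoint_sdiff_left⟩
    · exact (hCd hkl).mono sdiff_subset sdiff_subset
  · subst hCU
    apply Subset.antisymm
    · refine iUnion_subset fun k => ?_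
      dsimp only [reassign]; split_ifs
      exacts [union_subset (subset_iUnion C k) hAD, sdiff_subset.trans (subset_iUnion C k)]
    · intro p hp
      obtain ⟨k, hk⟩ := mem_iUnion.1 hp
      by_cases hpA : p ∈ A
      · exact mem_iUnion.2 ⟨j, by simp [hpA]⟩
      · by_cases hkj : k = j
        · exact mem_iUnion.2 ⟨j, by simp [← hkj, hk]⟩
        · exact mem_iUnion.2 ⟨k, by simp [reassign_of_ne hkj, hk, hpA]⟩

theorem partitionCost_reassign_sub [Fintype ι] [DecidableEq ι] [IsFiniteMeasure μ]
    {S : ℝ → ℝ} {F : ι → α → ℝ}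
    (hCd : Pairwise fun i j => Disjoint (C i) (C j)) (hij : i ≠ j) (hA : MeasurableSet A)
    (hAi : A ⊆ C i) (hFi : Integrable (F i) μ) (hFj : Integrable (F j) μ) :
    partitionCost μ S F (reassign C A j) - partitionCost μ S F C =
      S (μ.real (C i) - μ.real A) * ((∫ p in C i, F i p ∂μ) - ∫ p in A, F i p ∂μ)
        + S (μ.real (C j) + μ.real A) * ((∫ p in C j, F j p ∂μ) + ∫ p in A, F j p ∂μ)
        - (S (μ.real (C i)) * (∫ p in C i, F i p ∂μ)
          + S (μ.real (C j)) * ∫ p in C j, F j p ∂μ) := by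
  have hjA : Disjoint (C j) A := (hCd hij.symm).mono_right hAi
  unfold partitionCost
  rw [Fintype.sum_sub_sum_eq_of_eq_off_pair hij fun k hki hkj => by
    rw [reassign_of_ne hkj, (hCd hki).mono_right hAi |>.sdiff_eq_left]]
  rw [reassign_of_ne hij, reassign_self, measureReal_sdiff hAi hA, measureReal_union hjA hA,
    setIntegral_sdiff hA hFi.integrableOn hAi, setIntegral_union hjA hA hFj.integrableOn
      hFj.integrableOn]
  ring

noncomputable def marginalCost (μ : Measure α) (S : ℝ → ℝ) (F : ι → α → ℝ) (C : ι → Set α)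
    (k : ι) (p : α) : ℝ :=
  S (μ.real (C k)) * F k p + deriv S (μ.real (C k)) * ∫ z in C k, F k z ∂μ

theorem setIntegral_marginalCost [IsFiniteMeasure μ] {S : ℝ → ℝ} {F : ι → α → ℝ} {k : ι}
    (hF : Integrable (F k) μ) (B : Set α) :
    ∫ p in B, marginalCost μ S F C k p ∂μ = S (μ.real (C k)) * (∫ p in B, F k p ∂μ)
      + μ.real B * (deriv S (μ.real (C k)) * ∫ z in C k, F k z ∂μ) := by
  unfold marginalCost
  rw [integral_add (hF.const_mul _).integrableOn (integrable_const _).integrableOn,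
    integral_const_mul, setIntegral_const, smul_eq_mul]

theorem exists_partitionCost_reassign_lt [Fintype ι] [DecidableEq ι] [IsFiniteMeasure μ]
    {S : ℝ → ℝ} {F : ι → α → ℝ} (hC : IsMeasurablePartition D C)
    (hSi : DifferentiableAt ℝ S (μ.real (C i))) (hSj : DifferentiableAt ℝ S (μ.real (C j)))
    (hFm : ∀ k, Measurable (F k)) (hFb : ∀ k, ∃ b, ∀ p, ‖F k p‖ ≤ b) (hij : i ≠ j)
    {δ : ℝ} (hδ : 0 < δ) :
    ∃ η > 0, ∀ B ⊆ C i, MeasurableSet B → 0 < μ.real B → μ.real B < η →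
      (∀ p ∈ B, marginalCost μ S F C j p + δ ≤ marginalCost μ S F C i p) →
      partitionCost μ S F (reassign C B j) < partitionCost μ S F C := by
  obtain ⟨bi, hbi⟩ := hFb i
  obtain ⟨bj, hbj⟩ := hFb j
  have hF : ∀ k, Integrable (F k) μ := fun k =>
    let ⟨b, hb⟩ := hFb k
    Integrable.of_bound (hFm k).aestronglyMeasurable b (ae_of_all _ hb)
  have hmc : ∀ k, Integrable (marginalCost μ S F C k) μ := fun k =>
    ((hF k).const_mul _).add (integrable_const _)
  obtain ⟨η, hη, hsmall⟩ := mem_nhdsGT_iff_exists_Ioo_subset.1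
    (eventually_transfer_lt (bi := bi) (bj := bj) (Ii := ∫ z in C i, F i z ∂μ)
      (Ij := ∫ z in C j, F j z ∂μ) hSi.hasDerivAt hSj.hasDerivAt hδ)
  refine ⟨η, hη, fun B hBi hB hBpos hBη hBδ => ?_⟩
  have hI : |∫ p in B, F i p ∂μ| ≤ bi * μ.real B :=
    norm_setIntegral_le_of_norm_le_const (measure_lt_top _ _) fun p _ => hbi p
  have hJ : |∫ p in B, F j p ∂μ| ≤ bj * μ.real B :=
    norm_setIntegral_le_of_norm_le_const (measure_lt_top _ _) fun p _ => hbj p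
  have hgap := setIntegral_ge_of_const_le hB (measure_ne_top μ B)
    (fun p hp => le_sub_iff_add_le'.2 (hBδ p hp)) ((hmc i).sub (hmc j)).integrableOn
  rw [integral_sub (hmc i).integrableOn (hmc j).integrableOn, setIntegral_marginalCost (hF i),
    setIntegral_marginalCost (hF j), smul_eq_mul] at hgap
  have hlt := hsmall ⟨hBpos, hBη⟩ _ _ hI hJ (by linarith)
  rw [← sub_neg, partitionCost_reassign_sub hC.2.1 hij hB hBi (hF i) (hF j)]
  linarith

theorem ae_marginalCost_le_of_isMinOn [MetricSpace α] [HereditarilyLindelofSpace α]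
    [OpensMeasurableSpace α] [Fintype ι] [DecidableEq ι] [IsFiniteMeasure μ]
    [NullSingletonClass μ] {S : ℝ → ℝ} {F : ι → α → ℝ} (hC : IsMeasurablePartition D C)
    (hmin : IsMinOn (partitionCost μ S F) {C' | IsMeasurablePartition D C'} C)
    (hS : Differentiable ℝ S) (hFm : ∀ k, Measurable (F k)) (hFb : ∀ k, ∃ b, ∀ p, ‖F k p‖ ≤ b)
    (hij : i ≠ j) :
    ∀ᵐ p ∂μ.restrict (C i), marginalCost μ S F C i p ≤ marginalCost μ S F C j p := by
  by_contra h
  obtain ⟨δ, hδ, hbad⟩ := exists_measure_add_le_ne_zero_of_not_ae_le h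
  rw [Measure.restrict_apply' (hC.1 i)] at hbad
  have hmeas : ∀ k, Measurable (marginalCost μ S F C k) := fun k =>
    ((hFm k).const_mul _).add_const _
  obtain ⟨η, hη, hdecrease⟩ :=
    exists_partitionCost_reassign_lt (μ := μ) hC (hS _) (hS _) hFm hFb hij hδ
  obtain ⟨B, hBA, hB, hBpos, hBη⟩ := exists_subset_measure_pos_lt (μ := μ)
    ((measurableSet_le ((hmeas j).add_const δ) (hmeas i)).inter (hC.1 i)) hbad
    (ENNReal.ofReal_pos.2 hη)
  have hBi : B ⊆ C i := hBA.trans inter_subset_right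
  have hpart := isMeasurablePartition_reassign hC hB (hBi.trans (hC.subset i)) j
  exact (isMinOn_iff.1 hmin _ hpart).not_gt
    (hdecrease B hBi hB (ENNReal.toReal_pos hBpos.ne' (measure_ne_top μ B))
      (ENNReal.toReal_lt_of_lt_ofReal hBη) fun p hp => (hBA hp).1)

end Partition

theorem stmt_12_general (D : Set (ℝ × ℝ))
    (f : ℝ × ℝ → ℝ) (hfi : IntegrableOn f D)
    (μ : Measure (ℝ × ℝ))
    (hμ : μ = (volume.restrict D).withDensity (fun p => ENNReal.ofReal (f p)))
    (K : ℕ)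
    (F : Fin K → (ℝ × ℝ) → ℝ)
    (hF0 : ∀ i p, 0 ≤ F i p)
    (hFb : ∀ i, ∃ c : ℝ, ∀ p, F i p ≤ c)
    (hFm : ∀ i, Measurable (F i))
    (S : ℝ → ℝ) (hS : Differentiable ℝ S)
    (J : (Fin K → Set (ℝ × ℝ)) → ℝ)
    (hJ : ∀ C : Fin K → Set (ℝ × ℝ),
      J C = ∑ i, S ((μ (C i)).toReal) * ∫ p in C i, F i p ∂μ)
    (IsPartition : (Fin K → Set (ℝ × ℝ)) → Prop)
    (hPart : ∀ C : Fin K → Set (ℝ × ℝ), IsPartition C ↔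
      (∀ i, MeasurableSet (C i)) ∧
      (Pairwise fun i j => Disjoint (C i) (C j)) ∧
      (⋃ i, C i) = D)
    (Cstar : Fin K → Set (ℝ × ℝ))
    (hCstar : IsPartition Cstar)
    (hmin : ∀ C : Fin K → Set (ℝ × ℝ), IsPartition C → J Cstar ≤ J C) :
    ∀ i j : Fin K, i ≠ j →
      ∀ᵐ p ∂(μ.restrict (Cstar i)),
        S ((μ (Cstar i)).toReal) * F i p +
            deriv S ((μ (Cstar i)).toReal) * ∫ z in Cstar i, F i z ∂μ ≤
          S ((μ (Cstar j)).toReal) * F j p +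
            deriv S ((μ (Cstar j)).toReal) * ∫ z in Cstar j, F j z ∂μ := by
  subst hμ
  have := isFiniteMeasure_withDensity_ofReal hfi.2
  have hFnorm : ∀ k, ∃ b, ∀ p, ‖F k p‖ ≤ b := fun k =>
    (hFb k).imp fun b hb p => (Real.norm_of_nonneg (hF0 k p)).trans_le (hb p)
  intro i j hij
  exact ae_marginalCost_le_of_isMinOn ((hPart Cstar).1 hCstar)
    (isMinOn_iff.2 fun C hC => (hJ Cstar).symm.trans_le ((hmin C ((hPart C).2 hC)).trans_eq (hJ C)))
    hS hFm hFnorm hij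

/-- First-variation optimality condition of Lemma 1 of the paper: if the partition
`(C₁*, …, C_K*)` of the bounded region `D` minimizes the total power
`J(C) = ∑ᵢ S(μ(Cᵢ)) ∫_{Cᵢ} Fᵢ dμ` (with `μ` the user measure of density `f`), then
for every pair `i ≠ j` and μ-almost every point of `Cᵢ*`, the combined
transmission-plus-congestion cost of UAV `i` does not exceed that of UAV `j`. -/
theorem stmt_12 (D : Set (ℝ × ℝ)) (hDm : MeasurableSet D)
    (hDb : Bornology.IsBounded D)
    (f : ℝ × ℝ → ℝ) (hf0 : ∀ p, 0 ≤ f p) (hfi : IntegrableOn f D)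
    (μ : Measure (ℝ × ℝ))
    (hμ : μ = (volume.restrict D).withDensity (fun p => ENNReal.ofReal (f p)))
    (K : ℕ) (hK : 2 ≤ K)
    (F : Fin K → (ℝ × ℝ) → ℝ)
    (hF0 : ∀ i p, 0 ≤ F i p)
    (hFb : ∀ i, ∃ c : ℝ, ∀ p, F i p ≤ c)
    (hFm : ∀ i, Measurable (F i))
    (S : ℝ → ℝ) (hS : Differentiable ℝ S)
    (J : (Fin K → Set (ℝ × ℝ)) → ℝ)
    (hJ : ∀ C : Fin K → Set (ℝ × ℝ),
      J C = ∑ i, S ((μ (C i)).toReal) * ∫ p in C i, F i p ∂μ)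
    (IsPartition : (Fin K → Set (ℝ × ℝ)) → Prop)
    (hPart : ∀ C : Fin K → Set (ℝ × ℝ), IsPartition C ↔
      (∀ i, MeasurableSet (C i)) ∧
      (Pairwise fun i j => Disjoint (C i) (C j)) ∧
      (⋃ i, C i) = D)
    (Cstar : Fin K → Set (ℝ × ℝ))
    (hCstar : IsPartition Cstar)
    (hmin : ∀ C : Fin K → Set (ℝ × ℝ), IsPartition C → J Cstar ≤ J C) :
    ∀ i j : Fin K, i ≠ j →
      ∀ᵐ p ∂(μ.restrict (Cstar i)),
        S ((μ (Cstar i)).toReal) * F i p +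
            deriv S ((μ (Cstar i)).toReal) * ∫ z in Cstar i, F i z ∂μ ≤
          S ((μ (Cstar j)).toReal) * F j p +
            deriv S ((μ (Cstar j)).toReal) * ∫ z in Cstar j, F j z ∂μ :=
  stmt_12_general D f hfi μ hμ K F hF0 hFb hFm S hS J hJ IsPartition hPart Cstar hCstar hmin
end
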